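/- arXiv:2006.12509 — 2 statements merged into one kernel-verified Lean document; each statement's English description precedes it below -/
import Mathlib

section
/- For the d-dimensional depolarizing channel D_{d,ε}(ρ) = (1−ε)ρ + ε Tr[ρ] I/d with 0 ≤ ε < 1, the identity channel admits the decomposition id = (1 + (d²−1)ε/(d²(1−ε))) D_{d,ε} − (ε/(d²(1−ε))) Σ_{i=1}^{d²−1} D_{d,ε} ∘ P_i, where P_i(ρ) = σ_i ρ σ_i† for the d²−1 nonidentity generalized Pauli (Heisenberg–Weyl) unitaries σ_i. -/
open Matrix

/-! Twirling over all d² Paulis gives `Σ_{i ≠ 0} σ_i ρ σ_i† = d² T(ρ) - ρ` with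
`T(ρ) = Tr[ρ] I/d`. Since `T(ρ)` is a fixed point of `D = D_{d,ε}`, linearity gives
`Σ_{i ≠ 0} D(σ_i ρ σ_i†) = d² T(ρ) - D(ρ)`, and the decomposition reduces to inverting
`D(ρ) = (1-ε) ρ + ε T(ρ)` on the span of `ρ` and `T(ρ)`, which needs `ε ≠ 1`. -/

/-- The depolarizing channel `D_{d,ε}(ρ) = (1-ε) ρ + ε Tr[ρ] I/d` on `d × d` matrices. -/
noncomputable def depolarize (d : ℕ) (ε : ℝ) (ρ : Matrix (Fin d) (Fin d) ℂ) :
    Matrix (Fin d) (Fin d) ℂ :=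
  (1 - ε) • ρ + ε • (ρ.trace • ((d : ℂ)⁻¹ • (1 : Matrix (Fin d) (Fin d) ℂ)))

noncomputable def completelyDepolarize (d : ℕ) (ρ : Matrix (Fin d) (Fin d) ℂ) :
    Matrix (Fin d) (Fin d) ℂ :=
  ρ.trace • ((d : ℂ)⁻¹ • 1)

section Depolarize

variable {d : ℕ}

theorem depolarize_eq (ε : ℝ) (ρ : Matrix (Fin d) (Fin d) ℂ) :
    depolarize d ε ρ = (1 - ε) • ρ + ε • completelyDepolarize d ρ :=
  rfl

theorem trace_completelyDepolarize [NeZero d] (ρ : Matrix (Fin d) (Fin d) ℂ) :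
    (completelyDepolarize d ρ).trace = ρ.trace := by
  simp [completelyDepolarize, trace_smul, trace_one, NeZero.ne]

theorem completelyDepolarize_idem [NeZero d] (ρ : Matrix (Fin d) (Fin d) ℂ) :
    completelyDepolarize d (completelyDepolarize d ρ) = completelyDepolarize d ρ :=
  congrArg (· • ((d : ℂ)⁻¹ • 1)) (trace_completelyDepolarize ρ)

theorem depolarize_completelyDepolarize [NeZero d] (ε : ℝ) (ρ : Matrix (Fin d) (Fin d) ℂ) :
    depolarize d ε (completelyDepolarize d ρ) = completelyDepolarize d ρ := by
  rw [depolarize_eq, completelyDepolarize_idem]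
  module

@[simps]
noncomputable def depolarizeLinearMap (d : ℕ) (ε : ℝ) :
    Matrix (Fin d) (Fin d) ℂ →ₗ[ℂ] Matrix (Fin d) (Fin d) ℂ where
  toFun := depolarize d ε
  map_add' ρ τ := by
    simp only [depolarize, trace_add, smul_add, add_smul]
    abel
  map_smul' c ρ := by
    simp only [depolarize, trace_smul, smul_add, smul_eq_mul, mul_smul, RingHom.id_apply]
    rw [smul_comm c (1 - ε) ρ, smul_comm c ε]

theorem sum_erase_conj_eq_of_twirl {𝕜 n ι : Type*} [Field 𝕜] [StarRing 𝕜] [Fintype n]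
    [DecidableEq n] [Fintype ι] [DecidableEq ι] (σ : ι → Matrix n n 𝕜) {i₀ : ι}
    (hσ : σ i₀ = 1) {c : 𝕜} (hc : c ≠ 0) (ρ τ : Matrix n n 𝕜)
    (htwirl : c⁻¹ • ∑ i, σ i * ρ * (σ i)ᴴ = τ) :
    ∑ i ∈ Finset.univ.erase i₀, σ i * ρ * (σ i)ᴴ = c • τ - ρ := by
  rw [Finset.sum_erase_eq_sub (Finset.mem_univ i₀), (inv_smul_eq_iff₀ hc).mp htwirl, hσ]
  simp

theorem sum_erase_depolarize_conj_eq_of_twirl [NeZero d] {ι : Type*} [Fintype ι]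
    [DecidableEq ι] (ε : ℝ) (σ : ι → Matrix (Fin d) (Fin d) ℂ) {i₀ : ι} (hσ : σ i₀ = 1)
    (ρ : Matrix (Fin d) (Fin d) ℂ)
    (htwirl : ((d : ℂ) ^ 2)⁻¹ • ∑ i, σ i * ρ * (σ i)ᴴ = completelyDepolarize d ρ) :
    ∑ i ∈ Finset.univ.erase i₀, depolarize d ε (σ i * ρ * (σ i)ᴴ)
      = ((d : ℝ) ^ 2) • completelyDepolarize d ρ - depolarize d ε ρ := by
  have hd : (d : ℂ) ^ 2 ≠ 0 := pow_ne_zero 2 (NeZero.ne (d : ℂ))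
  let D := depolarizeLinearMap d ε
  calc ∑ i ∈ Finset.univ.erase i₀, D (σ i * ρ * (σ i)ᴴ)
      = D ((d : ℂ) ^ 2 • completelyDepolarize d ρ - ρ) := by
        rw [← map_sum, sum_erase_conj_eq_of_twirl σ hσ hd ρ _ htwirl]
    _ = (d : ℂ) ^ 2 • completelyDepolarize d ρ - D ρ := by
        rw [map_sub, map_smul, depolarizeLinearMap_apply, depolarize_completelyDepolarize]
    _ = ((d : ℝ) ^ 2) • completelyDepolarize d ρ - D ρ := by
        rw [← Complex.coe_smul, Complex.ofReal_pow, Complex.ofReal_natCast]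

end Depolarize

theorem identity_decomposition_depolarizing_general
    (d : ℕ) [NeZero d] (ε : ℝ) (hε1 : ε < 1)
    (σ : Fin (d ^ 2) → Matrix (Fin d) (Fin d) ℂ)
    (hσ0 : σ 0 = 1)
    (htwirl : ∀ ρ : Matrix (Fin d) (Fin d) ℂ,
      ((d : ℂ) ^ 2)⁻¹ • ∑ i, σ i * ρ * (σ i)ᴴ
        = ρ.trace • ((d : ℂ)⁻¹ • (1 : Matrix (Fin d) (Fin d) ℂ))) :
    ∀ ρ : Matrix (Fin d) (Fin d) ℂ,
      ρ = (1 + ((d : ℝ) ^ 2 - 1) * ε / ((d : ℝ) ^ 2 * (1 - ε))) • depolarize d ε ρ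
          - (ε / ((d : ℝ) ^ 2 * (1 - ε))) •
              ∑ i ∈ Finset.univ.erase 0, depolarize d ε (σ i * ρ * (σ i)ᴴ) := by
  intro ρ
  rw [sum_erase_depolarize_conj_eq_of_twirl ε σ hσ0 ρ (htwirl ρ), depolarize_eq]
  have hd : (d : ℝ) ≠ 0 := NeZero.ne _
  have hε : 1 - ε ≠ 0 := by linarith
  match_scalars <;> field_simp <;> ring

/-- decomposition of the identity channel via the depolarizing channel and
the generalized Pauli (Heisenberg–Weyl) unitary channels. -/
theorem identity_decomposition_depolarizing
    (d : ℕ) [NeZero d] (hd : 0 < d) (ε : ℝ) (hε0 : 0 ≤ ε) (hε1 : ε < 1)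
    (σ : Fin (d ^ 2) → Matrix (Fin d) (Fin d) ℂ)
    (hσ0 : σ 0 = 1)
    (htwirl : ∀ ρ : Matrix (Fin d) (Fin d) ℂ,
      ((d : ℂ) ^ 2)⁻¹ • ∑ i, σ i * ρ * (σ i)ᴴ
        = ρ.trace • ((d : ℂ)⁻¹ • (1 : Matrix (Fin d) (Fin d) ℂ))) :
    ∀ ρ : Matrix (Fin d) (Fin d) ℂ,
      ρ = (1 + ((d : ℝ) ^ 2 - 1) * ε / ((d : ℝ) ^ 2 * (1 - ε))) • depolarize d ε ρ
          - (ε / ((d : ℝ) ^ 2 * (1 - ε))) •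
              ∑ i ∈ Finset.univ.erase 0, depolarize d ε (σ i * ρ * (σ i)ᴴ) :=
  identity_decomposition_depolarizing_general d ε hε1 σ hσ0 htwirl
end

section
/- For the qubit amplitude damping channel A_ε with Kraus operators A_0 = |0⟩⟨0| + √(1−ε)|1⟩⟨1| and A_1 = √ε |0⟩⟨1|, and 0 ≤ ε < 1, the identity channel decomposes as id = ((1+√(1−ε))/(2(1−ε))) A_ε + ((1−√(1−ε))/(2(1−ε))) A_ε∘Z − (ε/(1−ε)) A_ε∘P_{|0⟩}, where Z(ρ)=ZρZ and P_{|0⟩}(ρ) = Tr[ρ]|0⟩⟨0|. -/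
/-!
In the computational basis, with `s = √(1 - ε)`, the channel `A_ε` moves the population `ε σ₁₁`
from `|1⟩` to `|0⟩`, keeps `(1 - ε) σ₁₁` in `|1⟩` and scales the coherences by `s`. Conjugating
by `Z` flips the sign of the coherences, and `P_{|0⟩}` puts the whole trace in `|0⟩`. Hence the
coherences of the combination are multiplied by the difference of the first two coefficients
times `s`, which is `s² / (1 - ε) = 1`, while on the diagonal the `A_ε ∘ P_{|0⟩}` term exactly
cancels the population moved by `A_ε`.
-/

open Matrix

noncomputable def ampDamp (ε : ℝ) (ρ : Matrix (Fin 2) (Fin 2) ℂ) : Matrix (Fin 2) (Fin 2) ℂ :=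
  let A0 : Matrix (Fin 2) (Fin 2) ℂ := !![1, 0; 0, (Real.sqrt (1 - ε) : ℂ)]
  let A1 : Matrix (Fin 2) (Fin 2) ℂ := !![0, (Real.sqrt ε : ℂ); 0, 0]
  A0 * ρ * A0ᴴ + A1 * ρ * A1ᴴ

noncomputable def zChannel (ρ : Matrix (Fin 2) (Fin 2) ℂ) : Matrix (Fin 2) (Fin 2) ℂ :=
  !![1, 0; 0, -1] * ρ * !![1, 0; 0, -1]

noncomputable def prep0 (ρ : Matrix (Fin 2) (Fin 2) ℂ) : Matrix (Fin 2) (Fin 2) ℂ :=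
  ρ.trace • !![1, 0; 0, 0]

theorem Matrix.conjTranspose_fin_two {α : Type*} [Star α] (a b c d : α) :
    !![a, b; c, d]ᴴ = !![star a, star c; star b, star d] := by
  ext i j
  fin_cases i <;> fin_cases j <;> rfl

lemma damping_kraus_sum_eq (t u : ℝ) (σ : Matrix (Fin 2) (Fin 2) ℂ) :
    !![1, 0; 0, (t : ℂ)] * σ * !![1, 0; 0, (t : ℂ)]ᴴ
        + !![0, (u : ℂ); 0, 0] * σ * !![0, (u : ℂ); 0, 0]ᴴ
      = !![σ 0 0 + u ^ 2 * σ 1 1, t * σ 0 1; t * σ 1 0, t ^ 2 * σ 1 1] := by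
  rw [σ.eta_fin_two]
  ext i j
  fin_cases i <;> fin_cases j <;> simp [conjTranspose_fin_two] <;> ring

lemma ampDamp_eq {ε : ℝ} (hε0 : 0 ≤ ε) (hε1 : ε ≤ 1) (σ : Matrix (Fin 2) (Fin 2) ℂ) :
    ampDamp ε σ = !![σ 0 0 + ε * σ 1 1, Real.sqrt (1 - ε) * σ 0 1;
                     Real.sqrt (1 - ε) * σ 1 0, (1 - ε) * σ 1 1] := by
  simp only [ampDamp, damping_kraus_sum_eq, ← Complex.ofReal_pow, Real.sq_sqrt hε0,
    Real.sq_sqrt (sub_nonneg.2 hε1), Complex.ofReal_sub, Complex.ofReal_one]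

lemma zChannel_eq (ρ : Matrix (Fin 2) (Fin 2) ℂ) :
    zChannel ρ = !![ρ 0 0, -ρ 0 1; -ρ 1 0, ρ 1 1] := by
  rw [ρ.eta_fin_two]
  simp [zChannel]

lemma prep0_eq (ρ : Matrix (Fin 2) (Fin 2) ℂ) :
    prep0 ρ = !![ρ 0 0 + ρ 1 1, 0; 0, 0] := by
  simp [prep0, trace_fin_two, smul_of]

/-- decomposition of the identity channel via the amplitude damping channel. -/
theorem identity_decomposition_ampDamp (ε : ℝ) (hε0 : 0 ≤ ε) (hε1 : ε < 1) :
    ∀ ρ : Matrix (Fin 2) (Fin 2) ℂ,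
      ρ = ((1 + Real.sqrt (1 - ε)) / (2 * (1 - ε))) • ampDamp ε ρ
          + ((1 - Real.sqrt (1 - ε)) / (2 * (1 - ε))) • ampDamp ε (zChannel ρ)
          - (ε / (1 - ε)) • ampDamp ε (prep0 ρ) := by
  intro ρ
  have hs : (Real.sqrt (1 - ε) : ℂ) ^ 2 = 1 - ε := by
    exact_mod_cast Real.sq_sqrt (sub_nonneg.2 hε1.le)
  have hne : (1 : ℂ) - ε ≠ 0 := by exact_mod_cast (sub_pos.2 hε1).ne'
  simp only [zChannel_eq, prep0_eq, ampDamp_eq hε0 hε1.le]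
  ext i j
  fin_cases i <;> fin_cases j <;> simp [Complex.real_smul] <;> field_simp
  · ring
  · linear_combination (-2 * ρ 0 1) * hs
  · linear_combination (-2 * ρ 1 0) * hs
  · ring
end
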